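/- For every r ≥ 2, the polynomial q(z) = 1 - 2z - z² + 2z^{r+1} - 2z^{r+2} + 2z^{2r+2} satisfies q(0) = 1 > 0 and q(1/2) < 0, hence has a root in (0, 1/2); moreover q'(α) < 0 for all 0 < α < 1/2, so this root is unique and simple in (0,1/2). -/

import Mathlib

/-! With `a = x ^ r`, the bound `(r + 1) a ≤ 1` on `[0, 1/2]` (from `r + 1 ≤ 2 ^ r`) gives
`q'(x) / 2 = -1 - x + (r + 1) a - (r + 2) x a + 2 x a · (r + 1) a ≤ -x - r x a < 0` there, so `q`
is strictly decreasing on `[0, 1/2]`. At the endpoints `q(0) = 1` and, with `t = 2⁻ʳ ≤ 1/4`,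
`q(1/2) = -1/4 + t/2 + t²/2 < 0`; the intermediate value theorem gives the root. -/

/-- q(z) = 1 - 2z - z² + 2z^{r+1} - 2z^{r+2} + 2z^{2r+2}. -/
def qPoly (r : ℕ) (z : ℝ) : ℝ :=
  1 - 2 * z - z ^ 2 + 2 * z ^ (r + 1) - 2 * z ^ (r + 2) + 2 * z ^ (2 * r + 2)

theorem existsUnique_mem_Ioo_eq_of_strictAntiOn {α δ : Type*}
    [ConditionallyCompleteLinearOrder α] [TopologicalSpace α] [OrderTopology α] [DenselyOrdered α]
    [LinearOrder δ] [TopologicalSpace δ] [OrderClosedTopology δ]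
    {f : α → δ} {a b : α} {y : δ} (hab : a ≤ b) (hf : ContinuousOn f (Set.Icc a b))
    (hanti : StrictAntiOn f (Set.Icc a b)) (hb : f b < y) (ha : y < f a) :
    ∃! c, c ∈ Set.Ioo a b ∧ f c = y := by
  obtain ⟨c, hc, hfc⟩ := intermediate_value_Ioo' hab hf ⟨hb, ha⟩
  refine ⟨c, ⟨hc, hfc⟩, fun d ⟨hd, hfd⟩ => ?_⟩
  exact hanti.injOn (Set.Ioo_subset_Icc_self hd) (Set.Ioo_subset_Icc_self hc) (hfd.trans hfc.symm)

theorem add_one_mul_pow_le_one (n : ℕ) {x : ℝ} (hx0 : 0 ≤ x) (hx : x ≤ 1 / 2) :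
    (n + 1) * x ^ n ≤ 1 := by
  have hn : (n : ℝ) + 1 ≤ 2 ^ n := by exact_mod_cast Nat.lt_two_pow_self
  calc (n + 1) * x ^ n ≤ 2 ^ n * (1 / 2) ^ n := by gcongr
    _ = 1 := by rw [← mul_pow]; norm_num

namespace qPoly

variable (r : ℕ)

theorem continuous : Continuous (qPoly r) := by
  unfold qPoly; fun_prop

theorem eval_zero : qPoly r 0 = 1 := by
  simp [qPoly]

theorem eval_half_neg (hr : 2 ≤ r) : qPoly r (1 / 2) < 0 := by
  set t : ℝ := (1 / 2) ^ r
  have ht0 : 0 < t := by positivity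
  have ht4 : t ≤ 1 / 4 := by
    calc t ≤ (1 / 2) ^ 2 := pow_le_pow_of_le_one (by norm_num) (by norm_num) hr
      _ = 1 / 4 := by norm_num
  have heval : qPoly r (1 / 2) = -1 / 4 + t / 2 + t ^ 2 / 2 := by
    rw [qPoly, show 2 * r + 2 = r * 2 + 2 by ring, pow_add, pow_add, pow_add, pow_mul]
    ring
  rw [heval]
  nlinarith

theorem hasDerivAt (x : ℝ) :
    HasDerivAt (qPoly r)
      (2 * (-1 - x + (r + 1) * x ^ r - (r + 2) * x ^ (r + 1) + (2 * r + 2) * x ^ (2 * r + 1))) x := by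
  have h := (((((hasDerivAt_id x).const_mul 2).const_sub 1).sub (hasDerivAt_pow 2 x)).add
    ((hasDerivAt_pow (r + 1) x).const_mul 2)).sub ((hasDerivAt_pow (r + 2) x).const_mul 2)
    |>.add ((hasDerivAt_pow (2 * r + 2) x).const_mul 2)
  refine h.congr_deriv ?_
  rw [show r + 2 - 1 = r + 1 by omega, show 2 * r + 2 - 1 = 2 * r + 1 by omega]
  simp only [Nat.add_sub_cancel, Nat.cast_add, Nat.cast_mul, Nat.cast_ofNat, Nat.cast_one]
  ring

theorem deriv_neg {x : ℝ} (hx0 : 0 < x) (hx : x ≤ 1 / 2) : deriv (qPoly r) x < 0 := by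
  rw [(hasDerivAt r x).deriv]
  set a := x ^ r
  have hbound : (r + 1) * a ≤ 1 := add_one_mul_pow_le_one r hx0.le hx
  have hxa : 0 ≤ x * a := by positivity
  have e1 : x ^ (r + 1) = x * a := by rw [pow_succ, mul_comm]
  have e2 : x ^ (2 * r + 1) = x * a ^ 2 := by rw [pow_succ, mul_comm, mul_comm 2, pow_mul]
  rw [e1, e2]
  nlinarith [mul_le_mul_of_nonneg_left hbound hxa]

theorem strictAntiOn : StrictAntiOn (qPoly r) (Set.Icc 0 (1 / 2)) := by
  refine strictAntiOn_of_deriv_neg (convex_Icc _ _) (continuous r).continuousOn fun x hx => ?_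
  rw [interior_Icc] at hx
  exact deriv_neg r hx.1 hx.2.le

end qPoly

theorem qPoly_root_in_Ioo (r : ℕ) (hr : 2 ≤ r) :
    qPoly r 0 = 1 ∧ qPoly r (1 / 2) < 0 ∧
    (∃! ρ : ℝ, ρ ∈ Set.Ioo (0 : ℝ) (1 / 2) ∧ qPoly r ρ = 0) ∧
    (∀ α ∈ Set.Ioo (0 : ℝ) (1 / 2), deriv (qPoly r) α < 0) := by
  refine ⟨qPoly.eval_zero r, qPoly.eval_half_neg r hr, ?_, fun α hα => qPoly.deriv_neg r hα.1 hα.2.le⟩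
  exact existsUnique_mem_Ioo_eq_of_strictAntiOn (by norm_num) (qPoly.continuous r).continuousOn
    (qPoly.strictAntiOn r) (qPoly.eval_half_neg r hr) (by rw [qPoly.eval_zero]; norm_num)
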